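/- arXiv:2002.10197 — 2 statements merged into one kernel-verified Lean document; each statement's English description precedes it below -/
import Mathlib

section
/- Let H be a finite-dimensional complex inner product space, let P_E and P_O be orthogonal projections on H with P_E + P_O = 1, and let Δ be a self-adjoint operator on H. Write Δ_E := P_E Δ P_E and Δ_O := P_O Δ P_O. Then the maximum of Tr[Π Δ] over all operators Π with 0 ≤ Π ≤ 1 satisfying the block-diagonality constraint Π = P_E Π P_E + P_O Π P_O equals ½(‖Δ_E + Δ_O‖₁ + Tr Δ), where ‖Y‖₁ = Tr √(Y† Y). Moreover, the maximum is attained by an orthogonal projection commuting with P_E. -/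
open Matrix
open scoped ComplexOrder Kronecker

/-- The trace norm `‖Y‖₁ = Tr √(Yᴴ Y)` of a complex matrix. -/
noncomputable def traceNorm {m : Type*} [Fintype m] [DecidableEq m]
    (Y : Matrix m m ℂ) : ℝ :=
  ((Matrix.posSemidef_conjTranspose_mul_self Y).1.eigenvectorUnitary.1 *
    diagonal (((↑) : ℝ → ℂ) ∘ (√·) ∘ (Matrix.posSemidef_conjTranspose_mul_self Y).1.eigenvalues) *
    (star (Matrix.posSemidef_conjTranspose_mul_self Y).1.eigenvectorUnitary :
      Matrix m m ℂ)).trace.re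

/-- The inner product `⟪x, y⟫ = ∑ i, conj (x i) * y i` on `m → ℂ`. -/
noncomputable def cinner {m : Type*} [Fintype m] (x y : m → ℂ) : ℂ := star x ⬝ᵥ y

/-- An orthogonal projection: a self-adjoint idempotent matrix. -/
def IsOrthoProj {m : Type*} [Fintype m] (P : Matrix m m ℂ) : Prop :=
  P.IsHermitian ∧ P * P = P

/-- An effect: an operator `S` with `0 ≤ S ≤ 1`. -/
def IsEffect {m : Type*} [Fintype m] [DecidableEq m] (S : Matrix m m ℂ) : Prop :=
  S.PosSemidef ∧ (1 - S).PosSemidef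

/-- The rank-one operator `|ψ⟩⟨ψ|`. -/
noncomputable def outer {m : Type*} (ψ : m → ℂ) : Matrix m m ℂ :=
  Matrix.vecMulVec ψ (star ψ)

/-
Let `D = P_E Δ P_E + (1 - P_E) Δ (1 - P_E)` be the pinching of `Δ`. A block-diagonal `T` has
`Tr[T Δ] = Tr[T D]`, and `Tr D = Tr Δ`. This reduces the problem to the unconstrained Helstrom
bound for `D`: splitting `D = D⁺ - D⁻`, an effect `T` has
`Tr[T D] = Tr D⁺ - Tr[(1 - T) D⁺] - Tr[T D⁻] ≤ Tr D⁺ = (‖D‖₁ + Tr D) / 2`,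
with equality for the spectral projection of `D` onto `[0, ∞)`. Since `D` commutes with `P_E`,
so does every function of `D`, in particular that projection, which is therefore block-diagonal.
-/

open scoped MatrixOrder

section

variable {m : Type*} [Fintype m]

lemma IsOrthoProj.posSemidef {P : Matrix m m ℂ} (hP : IsOrthoProj P) : P.PosSemidef := by
  simpa only [hP.1.eq, hP.2] using posSemidef_conjTranspose_mul_self P

variable [DecidableEq m]

namespace Matrix

variable {R : Type*} [CommRing R]

def pinching (P X : Matrix m m R) : Matrix m m R :=
  P * X * P + (1 - P) * X * (1 - P)

lemma trace_pinching_mul (P T X : Matrix m m R) :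
    (pinching P T * X).trace = (T * pinching P X).trace := by
  simp only [pinching, Matrix.add_mul, Matrix.mul_add, trace_add, Matrix.mul_assoc]
  rw [trace_mul_comm P, trace_mul_comm (1 - P)]
  simp only [Matrix.mul_assoc]

lemma trace_mul_eq_trace_mul_pinching {P T : Matrix m m R} (hT : pinching P T = T)
    (X : Matrix m m R) : (T * X).trace = (T * pinching P X).trace := by
  rw [← trace_pinching_mul, hT]

lemma pinching_one {P : Matrix m m R} (hP : IsIdempotentElem P) : pinching P 1 = 1 := by
  simp only [pinching, Matrix.mul_one, hP.eq, hP.one_sub.eq, add_sub_cancel]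

lemma trace_pinching {P : Matrix m m R} (hP : IsIdempotentElem P) (X : Matrix m m R) :
    (pinching P X).trace = X.trace := by
  simpa [pinching_one hP] using (trace_pinching_mul P 1 X).symm

lemma commute_pinching {P : Matrix m m R} (hP : IsIdempotentElem P) (X : Matrix m m R) :
    Commute P (pinching P X) := by
  simp only [Commute, SemiconjBy, pinching, Matrix.mul_add, Matrix.add_mul, ← Matrix.mul_assoc,
    hP.eq, hP.mul_one_sub_self, Matrix.zero_mul, add_zero]
  simp only [Matrix.mul_assoc, hP.eq, hP.one_sub_mul_self, Matrix.mul_zero, add_zero]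

lemma pinching_eq_self_of_commute {P T : Matrix m m R} (hP : IsIdempotentElem P)
    (hT : Commute T P) : pinching P T = T := by
  have hT' : Commute T (1 - P) := (Commute.one_right T).sub_right hT
  rw [pinching, Matrix.mul_assoc, hT.eq, ← Matrix.mul_assoc, hP.eq, Matrix.mul_assoc, hT'.eq,
    ← Matrix.mul_assoc, hP.one_sub.eq, ← hT.eq, ← hT'.eq, ← Matrix.mul_add, add_sub_cancel,
    Matrix.mul_one]

lemma IsHermitian.pinching [StarRing R] {X P : Matrix m m R} (hX : X.IsHermitian)
    (hP : P.IsHermitian) : (pinching P X).IsHermitian := by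
  have hQ : (1 - P).IsHermitian := isHermitian_one.sub hP
  have hPXP := isHermitian_conjTranspose_mul_mul P hX
  have hQXQ := isHermitian_conjTranspose_mul_mul (1 - P) hX
  rw [hP.eq] at hPXP
  rw [hQ.eq] at hQXQ
  exact hPXP.add hQXQ

lemma PosSemidef.trace_mul_nonneg {𝕜 : Type*} [RCLike 𝕜] {A B : Matrix m m 𝕜}
    (hA : A.PosSemidef) (hB : B.PosSemidef) : 0 ≤ (A * B).trace := by
  rw [← nonneg_iff_posSemidef] at hA hB
  rw [← CFC.sqrt_mul_sqrt_self B hB, ← Matrix.mul_assoc, trace_mul_cycle]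
  have h := star_left_conjugate_nonneg hA (CFC.sqrt B)
  rw [(CFC.sqrt_nonneg B).isSelfAdjoint.star_eq] at h
  exact (nonneg_iff_posSemidef.mp h).trace_nonneg

end Matrix


lemma traceNorm_eq_re_trace_abs (Y : Matrix m m ℂ) : traceNorm Y = (CFC.abs Y).trace.re := by
  rw [CFC.abs, CFC.sqrt_eq_real_sqrt _ (star_mul_self_nonneg Y), cfcₙ_eq_cfc, IsHermitian.cfc_eq]
  rfl

lemma Matrix.IsHermitian.re_trace_posPart {D : Matrix m m ℂ} (hD : D.IsHermitian) :
    (D⁺).trace.re = (traceNorm D + D.trace.re) / 2 := by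
  have h := congrArg (fun X => (trace X).re) (CFC.abs_add_self D)
  simp only [trace_add, trace_smul, Complex.add_re] at h
  rw [traceNorm_eq_re_trace_abs, h]
  simp

lemma IsEffect.re_trace_mul_le {T D : Matrix m m ℂ} (hT : IsEffect T) (hD : D.IsHermitian) :
    (T * D).trace.re ≤ (D⁺).trace.re := by
  have h₁ : 0 ≤ ((1 - T) * D⁺).trace :=
    hT.2.trace_mul_nonneg (nonneg_iff_posSemidef.mp (CFC.posPart_nonneg D))
  have h₂ : 0 ≤ (T * D⁻).trace :=
    hT.1.trace_mul_nonneg (nonneg_iff_posSemidef.mp (CFC.negPart_nonneg D))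
  have hsplit : T * D = D⁺ - (1 - T) * D⁺ - T * D⁻ := by
    rw [Matrix.sub_mul, Matrix.one_mul, sub_sub_cancel, ← Matrix.mul_sub,
      CFC.posPart_sub_negPart D hD]
  rw [hsplit, trace_sub, trace_sub, Complex.sub_re, Complex.sub_re]
  linarith [(Complex.nonneg_iff.mp h₁).1, (Complex.nonneg_iff.mp h₂).1]

lemma IsOrthoProj.one_sub {P : Matrix m m ℂ} (hP : IsOrthoProj P) : IsOrthoProj (1 - P) :=
  ⟨isHermitian_one.sub hP.1, IsIdempotentElem.one_sub hP.2⟩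

lemma IsOrthoProj.isEffect {P : Matrix m m ℂ} (hP : IsOrthoProj P) : IsEffect P :=
  ⟨hP.posSemidef, hP.one_sub.posSemidef⟩

noncomputable def nonnegSpectralProj (D : Matrix m m ℂ) : Matrix m m ℂ :=
  cfc (fun x : ℝ => if 0 ≤ x then 1 else 0) D

lemma isOrthoProj_nonnegSpectralProj (D : Matrix m m ℂ) : IsOrthoProj (nonnegSpectralProj D) := by
  refine ⟨cfc_predicate _ D, ?_⟩
  have hcont := (finite_real_spectrum (A := D)).continuousOn
    (fun x : ℝ => if 0 ≤ x then (1 : ℝ) else 0)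
  rw [nonnegSpectralProj, ← cfc_mul _ _ D hcont hcont]
  congr 1
  funext x
  split_ifs <;> simp

lemma Matrix.IsHermitian.nonnegSpectralProj_mul_self {D : Matrix m m ℂ} (hD : D.IsHermitian) :
    nonnegSpectralProj D * D = D⁺ := by
  have hcont := (finite_real_spectrum (A := D)).continuousOn
    (fun x : ℝ => if 0 ≤ x then (1 : ℝ) else 0)
  rw [CFC.posPart_def, cfcₙ_eq_cfc, nonnegSpectralProj]
  nth_rewrite 2 [← cfc_id' ℝ D]
  rw [← cfc_mul _ _ D hcont]
  congr 1
  funext x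
  split_ifs with hx
  · simp [hx]
  · simp [le_of_not_ge hx]

end

theorem blockDiagonal_helstrom_bound_general
    {n : ℕ} (P_E P_O : Matrix (Fin n) (Fin n) ℂ)
    (hPE : IsOrthoProj P_E) (hsum : P_E + P_O = 1)
    (Δ : Matrix (Fin n) (Fin n) ℂ) (hΔ : Δ.IsHermitian) :
    IsGreatest {x : ℝ | ∃ T : Matrix (Fin n) (Fin n) ℂ, IsEffect T ∧
        T = P_E * T * P_E + P_O * T * P_O ∧ x = ((T * Δ).trace).re}
      ((traceNorm (P_E * Δ * P_E + P_O * Δ * P_O) + Δ.trace.re) / 2) ∧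
    ∃ T : Matrix (Fin n) (Fin n) ℂ, IsOrthoProj T ∧ T * P_E = P_E * T ∧
      T = P_E * T * P_E + P_O * T * P_O ∧
      ((T * Δ).trace).re = (traceNorm (P_E * Δ * P_E + P_O * Δ * P_O) + Δ.trace.re) / 2 := by
  obtain rfl : P_O = 1 - P_E := eq_sub_of_add_eq' hsum
  rw [show P_E * Δ * P_E + (1 - P_E) * Δ * (1 - P_E) = pinching P_E Δ from rfl]
  have hD : (pinching P_E Δ).IsHermitian := hΔ.pinching hPE.1
  have hvalue : ((traceNorm (pinching P_E Δ) + Δ.trace.re) / 2) = (pinching P_E Δ)⁺.trace.re := by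
    rw [hD.re_trace_posPart, trace_pinching hPE.2]
  set T₀ := nonnegSpectralProj (pinching P_E Δ)
  have hT₀_comm : Commute T₀ P_E := (commute_pinching hPE.2 Δ).symm.cfc_real _
  have hT₀_block : pinching P_E T₀ = T₀ := pinching_eq_self_of_commute hPE.2 hT₀_comm
  have hT₀_value : (T₀ * Δ).trace.re = (traceNorm (pinching P_E Δ) + Δ.trace.re) / 2 := by
    rw [hvalue, trace_mul_eq_trace_mul_pinching hT₀_block, hD.nonnegSpectralProj_mul_self]
  refine ⟨⟨⟨T₀, (isOrthoProj_nonnegSpectralProj _).isEffect, hT₀_block.symm, hT₀_value.symm⟩, ?_⟩,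
    T₀, isOrthoProj_nonnegSpectralProj _, hT₀_comm.eq, hT₀_block.symm, hT₀_value⟩
  rintro _ ⟨T, hT, hT_block, rfl⟩
  rw [hvalue, trace_mul_eq_trace_mul_pinching hT_block.symm]
  exact hT.re_trace_mul_le hD

/-- **Constrained Helstrom optimization.** The maximum of `Tr[Π Δ]` over block-diagonal
effects equals `(‖Δ_E + Δ_O‖₁ + Tr Δ)/2`, and it is attained by an orthogonal projection
commuting with `P_E`. -/
theorem blockDiagonal_helstrom_bound
    {n : ℕ} (P_E P_O : Matrix (Fin n) (Fin n) ℂ)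
    (hPE : IsOrthoProj P_E) (hPO : IsOrthoProj P_O) (hsum : P_E + P_O = 1)
    (Δ : Matrix (Fin n) (Fin n) ℂ) (hΔ : Δ.IsHermitian) :
    IsGreatest {x : ℝ | ∃ T : Matrix (Fin n) (Fin n) ℂ, IsEffect T ∧
        T = P_E * T * P_E + P_O * T * P_O ∧ x = ((T * Δ).trace).re}
      ((traceNorm (P_E * Δ * P_E + P_O * Δ * P_O) + Δ.trace.re) / 2) ∧
    ∃ T : Matrix (Fin n) (Fin n) ℂ, IsOrthoProj T ∧ T * P_E = P_E * T ∧
      T = P_E * T * P_E + P_O * T * P_O ∧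
      ((T * Δ).trace).re = (traceNorm (P_E * Δ * P_E + P_O * Δ * P_O) + Δ.trace.re) / 2 :=
  blockDiagonal_helstrom_bound_general P_E P_O hPE hsum Δ hΔ
end

section
/- Let H be a finite-dimensional complex inner product space and let P_E and P_O be orthogonal projections on H with P_E + P_O = 1. Let K := ℂ² ⊗ ℂ² with standard basis vectors e_i ⊗ e_j, and for a, b ∈ ℂ with |a|² = |b|² = ½ let ω := a (e₀ ⊗ e₀) + b (e₁ ⊗ e₁) ∈ K. On H ⊗ K define P'_E := P_E ⊗ |e₀⊗e₀⟩⟨e₀⊗e₀| + P_O ⊗ |e₁⊗e₁⟩⟨e₁⊗e₁| and P'_O := P_E ⊗ |e₁⊗e₁⟩⟨e₁⊗e₁| + P_O ⊗ |e₀⊗e₀⟩⟨e₀⊗e₀|. Then for all unit vectors ψ, φ ∈ H with ⟪ψ, φ⟫ = 0, the vectors ψ' := ψ ⊗ ω and φ' := φ ⊗ ω satisfy ⟪P'_E ψ', P'_E φ'⟫ = 0 and ⟪P'_O ψ', P'_O φ'⟫ = 0. -/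
/-!
Applying `P'_E` to `ψ ⊗ ω` gives `P_E ψ ⊗ a e₀₀ + P_O ψ ⊗ b e₁₁`. Since `e₀₀ ⊥ e₁₁`, the inner
product of the two images is `|a|² ⟪P_E ψ, P_E φ⟫ + |b|² ⟪P_O ψ, P_O φ⟫`, and with
`|a|² = |b|² = ½` this is `½ (⟪ψ, P_E φ⟫ + ⟪ψ, P_O φ⟫) = ½ ⟪ψ, φ⟫ = 0`. The ancilla's
equal weights are what let the two projections recombine into the identity; `P'_O` is the
same computation with `e₀₀` and `e₁₁` exchanged.
-/

open Matrix
open scoped ComplexOrder Kronecker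

/-- The standard basis vector `e_i ⊗ e_j` of `ℂ² ⊗ ℂ²`. -/
noncomputable def e2 (i j : Fin 2) : Fin 2 × Fin 2 → ℂ := fun p => if p = (i, j) then 1 else 0

/-- The tensor product `ψ ⊗ ω` of a vector of `H` with a vector of `K = ℂ² ⊗ ℂ²`. -/
noncomputable def tensorVec {m : Type*} (ψ : m → ℂ) (ω : Fin 2 × Fin 2 → ℂ) :
    m × (Fin 2 × Fin 2) → ℂ := fun p => ψ p.1 * ω p.2

section cinner

variable {m : Type*} [Fintype m]

lemma cinner_add_left (x y z : m → ℂ) : cinner (x + y) z = cinner x z + cinner y z := by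
  simp [cinner, add_dotProduct]

lemma cinner_add_right (x y z : m → ℂ) : cinner x (y + z) = cinner x y + cinner x z := by
  simp [cinner, dotProduct_add]

lemma cinner_smul_left (c : ℂ) (x y : m → ℂ) : cinner (c • x) y = star c * cinner x y := by
  simp [cinner, star_smul, smul_dotProduct]

lemma cinner_smul_right (c : ℂ) (x y : m → ℂ) : cinner x (c • y) = c * cinner x y := by
  simp [cinner, dotProduct_smul]

lemma cinner_comm (x y : m → ℂ) : cinner y x = star (cinner x y) := by
  rw [cinner, cinner, star_dotProduct]

lemma cinner_mulVec_left (P : Matrix m m ℂ) (x y : m → ℂ) :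
    cinner (P *ᵥ x) y = cinner x (Pᴴ *ᵥ y) := by
  simp [cinner, star_mulVec, dotProduct_mulVec]

lemma outer_mulVec (u x : m → ℂ) : outer u *ᵥ x = cinner u x • u := by
  ext i
  simp [outer, cinner, mulVec, dotProduct, vecMulVec_apply, Finset.mul_sum, mul_comm, mul_left_comm]

lemma IsOrthoProj.cinner_mulVec_mulVec {P : Matrix m m ℂ} (hP : IsOrthoProj P) (x y : m → ℂ) :
    cinner (P *ᵥ x) (P *ᵥ y) = cinner x (P *ᵥ y) := by
  rw [cinner_mulVec_left, hP.1.eq, mulVec_mulVec, hP.2]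

variable [DecidableEq m] in
lemma IsOrthoProj.cinner_add_cinner_of_add_eq_one {Q R : Matrix m m ℂ} (hQ : IsOrthoProj Q)
    (hR : IsOrthoProj R) (hQR : Q + R = 1) (x y : m → ℂ) :
    cinner (Q *ᵥ x) (Q *ᵥ y) + cinner (R *ᵥ x) (R *ᵥ y) = cinner x y := by
  rw [hQ.cinner_mulVec_mulVec, hR.cinner_mulVec_mulVec, ← cinner_add_right, ← add_mulVec, hQR,
    one_mulVec]

end cinner

section tensorVec

variable {m : Type*} [Fintype m]

lemma cinner_tensorVec (x x' : m → ℂ) (y y' : Fin 2 × Fin 2 → ℂ) :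
    cinner (tensorVec x y) (tensorVec x' y') = cinner x x' * cinner y y' := by
  simp only [cinner, dotProduct, Pi.star_apply, tensorVec, star_mul']
  rw [Finset.sum_mul_sum, Fintype.sum_prod_type]
  exact Finset.sum_congr rfl fun _ _ => Finset.sum_congr rfl fun _ _ => by ring

lemma kronecker_mulVec_tensorVec (A : Matrix m m ℂ) (B : Matrix (Fin 2 × Fin 2) (Fin 2 × Fin 2) ℂ)
    (x : m → ℂ) (y : Fin 2 × Fin 2 → ℂ) :
    (A ⊗ₖ B) *ᵥ tensorVec x y = tensorVec (A *ᵥ x) (B *ᵥ y) := by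
  ext p
  simp only [mulVec, dotProduct, tensorVec, kroneckerMap_apply]
  rw [Finset.sum_mul_sum, Fintype.sum_prod_type]
  exact Finset.sum_congr rfl fun _ _ => Finset.sum_congr rfl fun _ _ => by ring

variable {u w : Fin 2 × Fin 2 → ℂ}

lemma kronecker_outer_mulVec_tensorVec (hu : cinner u u = 1) (hw : cinner w w = 1)
    (huw : cinner u w = 0) (Q R : Matrix m m ℂ) (a b : ℂ) (x : m → ℂ) :
    (Q ⊗ₖ outer u + R ⊗ₖ outer w) *ᵥ tensorVec x (a • u + b • w) =
      tensorVec (Q *ᵥ x) (a • u) + tensorVec (R *ᵥ x) (b • w) := by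
  have hwu : cinner w u = 0 := by rw [cinner_comm, huw, star_zero]
  simp only [add_mulVec, kronecker_mulVec_tensorVec, outer_mulVec, cinner_add_right,
    cinner_smul_right, hu, hw, huw, hwu, mul_one, mul_zero, add_zero, zero_add]

lemma cinner_kronecker_outer_mulVec_tensorVec (hu : cinner u u = 1) (hw : cinner w w = 1)
    (huw : cinner u w = 0) (Q R : Matrix m m ℂ) (a b : ℂ) (x y : m → ℂ) :
    cinner ((Q ⊗ₖ outer u + R ⊗ₖ outer w) *ᵥ tensorVec x (a • u + b • w))
        ((Q ⊗ₖ outer u + R ⊗ₖ outer w) *ᵥ tensorVec y (a • u + b • w)) =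
      Complex.normSq a * cinner (Q *ᵥ x) (Q *ᵥ y) +
        Complex.normSq b * cinner (R *ᵥ x) (R *ᵥ y) := by
  have hwu : cinner w u = 0 := by rw [cinner_comm, huw, star_zero]
  simp only [kronecker_outer_mulVec_tensorVec hu hw huw, cinner_add_left, cinner_add_right,
    cinner_tensorVec, cinner_smul_left, cinner_smul_right, hu, hw, huw, hwu, Complex.star_def]
  rw [Complex.normSq_eq_conj_mul_self, Complex.normSq_eq_conj_mul_self]
  ring

end tensorVec

lemma cinner_e2 (i j k l : Fin 2) :
    cinner (e2 i j) (e2 k l) = if (i, j) = (k, l) then 1 else 0 := by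
  simp [cinner, e2, dotProduct, apply_ite star, eq_comm]

theorem maximally_entangled_ancilla_restores_orthogonality_general
    {n : ℕ} (P_E P_O : Matrix (Fin n) (Fin n) ℂ)
    (hPE : IsOrthoProj P_E) (hPO : IsOrthoProj P_O) (hsum : P_E + P_O = 1)
    (a b : ℂ) (ha : Complex.normSq a = 1 / 2) (hb : Complex.normSq b = 1 / 2)
    (ω : Fin 2 × Fin 2 → ℂ) (hω : ω = a • e2 0 0 + b • e2 1 1)
    (P'E P'O : Matrix (Fin n × (Fin 2 × Fin 2)) (Fin n × (Fin 2 × Fin 2)) ℂ)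
    (hP'E : P'E = P_E ⊗ₖ outer (e2 0 0) + P_O ⊗ₖ outer (e2 1 1))
    (hP'O : P'O = P_E ⊗ₖ outer (e2 1 1) + P_O ⊗ₖ outer (e2 0 0))
    (ψ φ : Fin n → ℂ)
    (horth : cinner ψ φ = 0) :
    cinner (P'E.mulVec (tensorVec ψ ω)) (P'E.mulVec (tensorVec φ ω)) = 0 ∧
    cinner (P'O.mulVec (tensorVec ψ ω)) (P'O.mulVec (tensorVec φ ω)) = 0 := by
  have h00 : cinner (e2 0 0) (e2 0 0) = 1 := by simp [cinner_e2]
  have h11 : cinner (e2 1 1) (e2 1 1) = 1 := by simp [cinner_e2]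
  have h01 : cinner (e2 0 0) (e2 1 1) = 0 := by simp [cinner_e2]
  have h10 : cinner (e2 1 1) (e2 0 0) = 0 := by simp [cinner_e2]
  have hproj := hPE.cinner_add_cinner_of_add_eq_one hPO hsum ψ φ
  constructor
  · rw [hP'E, hω, cinner_kronecker_outer_mulVec_tensorVec h00 h11 h01, ha, hb, ← mul_add, hproj,
      horth, mul_zero]
  · rw [hP'O, hω, add_comm (a • _), cinner_kronecker_outer_mulVec_tensorVec h11 h00 h10, ha, hb,
      ← mul_add, hproj, horth, mul_zero]

/-- **Theorem 2, sufficiency.** With a maximally entangled ancilla `ω = a|00⟩ + b|11⟩`,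
`|a|² = |b|² = 1/2`, the `E` and `O` parts of `ψ ⊗ ω` and `φ ⊗ ω` are separately
orthogonal for any two orthogonal unit vectors `ψ, φ`. -/
theorem maximally_entangled_ancilla_restores_orthogonality
    {n : ℕ} (P_E P_O : Matrix (Fin n) (Fin n) ℂ)
    (hPE : IsOrthoProj P_E) (hPO : IsOrthoProj P_O) (hsum : P_E + P_O = 1)
    (a b : ℂ) (ha : Complex.normSq a = 1 / 2) (hb : Complex.normSq b = 1 / 2)
    (ω : Fin 2 × Fin 2 → ℂ) (hω : ω = a • e2 0 0 + b • e2 1 1)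
    (P'E P'O : Matrix (Fin n × (Fin 2 × Fin 2)) (Fin n × (Fin 2 × Fin 2)) ℂ)
    (hP'E : P'E = P_E ⊗ₖ outer (e2 0 0) + P_O ⊗ₖ outer (e2 1 1))
    (hP'O : P'O = P_E ⊗ₖ outer (e2 1 1) + P_O ⊗ₖ outer (e2 0 0))
    (ψ φ : Fin n → ℂ) (hψ : cinner ψ ψ = 1) (hφ : cinner φ φ = 1)
    (horth : cinner ψ φ = 0) :
    cinner (P'E.mulVec (tensorVec ψ ω)) (P'E.mulVec (tensorVec φ ω)) = 0 ∧
    cinner (P'O.mulVec (tensorVec ψ ω)) (P'O.mulVec (tensorVec φ ω)) = 0 :=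
  maximally_entangled_ancilla_restores_orthogonality_general P_E P_O hPE hPO hsum a b ha hb ω hω P'E
    P'O hP'E hP'O ψ φ horth
end
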